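/- arXiv:1908.01655 — 4 statements merged into one kernel-verified Lean document; each statement's English description precedes it below -/
import Mathlib

section
/- Let π: S₄ → S₃ be the retraction with kernel the Klein four-group and ω₀ the explicit 3-cocycle on S₃. Then for all g₁, g₂ ∈ S₄ and h ∈ H = ⟨(1234)⟩, the inflated cocycle satisfies (inf ω₀)(g₁,g₂,h) = (-1)^{ε(g₁)ε(g₂)ε(h)}, where sgn(g) = (-1)^{ε(g)}. -/
open Equiv

abbrev S4 := Equiv.Perm (Fin 4)

/-- the 4-cycle (1234), zero-indexed as (0 1 2 3) -/
def fourCycle : S4 := Equiv.swap 0 1 * Equiv.swap 1 2 * Equiv.swap 2 3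

/-- the 3-cycle (123), zero-indexed as (0 1 2) -/
def threeCycle : S4 := Equiv.swap 0 1 * Equiv.swap 1 2

/-- H = ⟨(1234)⟩ ≤ S₄. -/
def Hsub : Subgroup S4 := Subgroup.zpowers fourCycle

/-- The copy of S₃ inside S₄ as the stabilizer of the last point. -/
def S3sub : Subgroup S4 := MulAction.stabilizer S4 (3 : Fin 4)

/-- N = {e, (12)(34), (13)(24), (14)(23)} (zero-indexed), as a set. -/
def NSet : Set S4 := {1, Equiv.swap 0 1 * Equiv.swap 2 3, Equiv.swap 0 2 * Equiv.swap 1 3,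
  Equiv.swap 0 3 * Equiv.swap 1 2}

/-- ε(g) ∈ {0,1} defined by sgn(g) = (-1)^{ε(g)}. -/
def eps (g : S4) : ℕ := if Equiv.Perm.sign g = 1 then 0 else 1

/-- f₀((1234)^z) = 1 for z = 0,1 and -1 for z = 2,3, as a function on H. -/
def f0 (g : S4) : ℤ := if g = 1 ∨ g = fourCycle then 1 else -1

/-- the 2-cochain ξ(g₁,g₂) = f(g₂)^{ε(g₁)} -/
def xi (f : S4 → ℤ) (g₁ g₂ : S4) : ℂ := ((f g₂ : ℤ) : ℂ) ^ eps g₁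

/-- the coboundary dξ(g₁,g₂,g₃) = ξ(g₂,g₃) ξ(g₁g₂,g₃)⁻¹ ξ(g₁,g₂g₃) ξ(g₁,g₂)⁻¹ -/
noncomputable def dxi (f : S4 → ℤ) (g₁ g₂ g₃ : S4) : ℂ :=
  xi f g₂ g₃ * (xi f (g₁ * g₂) g₃)⁻¹ * xi f g₁ (g₂ * g₃) * (xi f g₁ g₂)⁻¹

/-- α(a,b,c) = exp(2πi (a + b - [a+b]₃) c / 9) -/
noncomputable def alphaFun (a b c : ℤ) : ℂ :=
  Complex.exp (2 * (Real.pi : ℂ) * Complex.I * (((a + b - (a + b) % 3) * c : ℤ) : ℂ) / 9)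

/-- the x-coordinate of an element (123)^x (13)^y of S₃ ≤ S₄ -/
def Xc (g : S4) : ℤ :=
  if g = 1 ∨ g = Equiv.swap 0 2 then 0
  else if g = threeCycle ∨ g = threeCycle * Equiv.swap 0 2 then 1 else 2

/-- the y-coordinate of an element (123)^x (13)^y of S₃ ≤ S₄ -/
def Yc (g : S4) : ℕ := eps g

/-- ω₀ on the copy of S₃ inside S₄, in the coordinates σ = (123)^x (13)^y. -/
noncomputable def omega0 (g₁ g₂ g₃ : S4) : ℂ :=
  alphaFun (Xc g₁) ((-1) ^ Yc g₁ * Xc g₂) ((-1) ^ (Yc g₁ + Yc g₂) * Xc g₃) *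
    (-1 : ℂ) ^ (Yc g₁ * Yc g₂ * Yc g₃)

/-- the inflation of ω₀ along π : S₄ → S₃ -/
noncomputable def infOmega0 (π : S4 →* S4) (g₁ g₂ g₃ : S4) : ℂ :=
  omega0 (π g₁) (π g₂) (π g₃)

/-- the adapted 3-cocycle ω = (inf ω₀)·dξ on S₄ -/
noncomputable def omegaAd (π : S4 →* S4) (f : S4 → ℤ) (g₁ g₂ g₃ : S4) : ℂ :=
  infOmega0 π g₁ g₂ g₃ * dxi f g₁ g₂ g₃


section Aux

lemma mem_NSet_iff' (n : S4) : n ∈ NSet ↔ (n = 1 ∨ n = Equiv.swap 0 1 * Equiv.swap 2 3 ∨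
    n = Equiv.swap 0 2 * Equiv.swap 1 3 ∨ n = Equiv.swap 0 3 * Equiv.swap 1 2) := by
  simp [NSet, Set.mem_insert_iff, Set.mem_singleton_iff]

lemma exists_NSet_factor (g : S4) : ∃ n : S4, n ∈ NSet ∧ (n⁻¹ * g) 3 = 3 := by
  have : ∃ n : S4, (n = 1 ∨ n = Equiv.swap 0 1 * Equiv.swap 2 3 ∨
      n = Equiv.swap 0 2 * Equiv.swap 1 3 ∨ n = Equiv.swap 0 3 * Equiv.swap 1 2) ∧
      (n⁻¹ * g) 3 = 3 := by revert g; decide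
  obtain ⟨n, hn, h3⟩ := this
  exact ⟨n, (mem_NSet_iff' n).2 hn, h3⟩

lemma mem_S3sub_iff (g : S4) : g ∈ S3sub ↔ g 3 = 3 := by
  rw [S3sub, MulAction.mem_stabilizer_iff]; rfl

lemma sign_NSet : ∀ n ∈ NSet, Equiv.Perm.sign n = 1 := by
  intro n hn
  rw [mem_NSet_iff'] at hn
  revert hn; revert n; decide

lemma pi_decomp (π : S4 →* S4) (hker : ∀ g : S4, π g = 1 ↔ g ∈ NSet)
    (hid : ∀ σ ∈ S3sub, π σ = σ) (g : S4) :
    ∃ n : S4, n ∈ NSet ∧ π g = n⁻¹ * g := by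
  obtain ⟨n, hn, h3⟩ := exists_NSet_factor g
  refine ⟨n, hn, ?_⟩
  have h1 : π n = 1 := (hker n).2 hn
  have h2 : π (n⁻¹ * g) = n⁻¹ * g := hid _ ((mem_S3sub_iff _).2 h3)
  calc π g = π (n * (n⁻¹ * g)) := by rw [mul_inv_cancel_left]
    _ = π n * π (n⁻¹ * g) := map_mul _ _ _
    _ = n⁻¹ * g := by rw [h1, one_mul, h2]

lemma eps_pi (π : S4 →* S4) (hker : ∀ g : S4, π g = 1 ↔ g ∈ NSet)
    (hid : ∀ σ ∈ S3sub, π σ = σ) (g : S4) : eps (π g) = eps g := by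
  obtain ⟨n, hn, hpg⟩ := pi_decomp π hker hid g
  have hs : Equiv.Perm.sign (π g) = Equiv.Perm.sign g := by
    rw [hpg, map_mul, map_inv, sign_NSet n hn, inv_one, one_mul]
  unfold eps
  rw [hs]

lemma pi_fourCycle (π : S4 →* S4) (hker : ∀ g : S4, π g = 1 ↔ g ∈ NSet)
    (hid : ∀ σ ∈ S3sub, π σ = σ) : π fourCycle = Equiv.swap 0 2 := by
  have hn : (Equiv.swap 0 3 * Equiv.swap 1 2 : S4) ∈ NSet := by
    rw [mem_NSet_iff']; tauto
  have h1 : π (Equiv.swap 0 3 * Equiv.swap 1 2) = 1 := (hker _).2 hn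
  have hm : (Equiv.swap 0 3 * Equiv.swap 1 2 : S4) * fourCycle = Equiv.swap 0 2 := by decide
  have h2 : π (Equiv.swap 0 2 : S4) = Equiv.swap 0 2 := by
    apply hid
    rw [mem_S3sub_iff]
    decide
  calc π fourCycle = π (Equiv.swap 0 3 * Equiv.swap 1 2) * π fourCycle := by
        rw [h1, one_mul]
    _ = π ((Equiv.swap 0 3 * Equiv.swap 1 2) * fourCycle) := (map_mul _ _ _).symm
    _ = Equiv.swap 0 2 := by rw [hm, h2]

lemma pi_H (π : S4 →* S4) (hker : ∀ g : S4, π g = 1 ↔ g ∈ NSet)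
    (hid : ∀ σ ∈ S3sub, π σ = σ) (h : S4) (hh : h ∈ Hsub) :
    π h = 1 ∨ π h = Equiv.swap 0 2 := by
  obtain ⟨z, rfl⟩ := hh
  have h4 : fourCycle ^ (4 : ℤ) = 1 := by
    rw [show (4 : ℤ) = ((4 : ℕ) : ℤ) from rfl, zpow_natCast]
    decide
  have hmod : fourCycle ^ z = fourCycle ^ (z % 4) := by
    conv_lhs => rw [← Int.emod_add_mul_ediv z 4]
    rw [zpow_add, zpow_mul, h4, one_zpow, mul_one]
  have h2N : fourCycle ^ (2 : ℕ) ∈ NSet := by rw [mem_NSet_iff']; decide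
  have hc : π fourCycle = Equiv.swap 0 2 := pi_fourCycle π hker hid
  have hc2 : π (fourCycle ^ (2 : ℕ)) = 1 := (hker _).2 h2N
  have hr : z % 4 = 0 ∨ z % 4 = 1 ∨ z % 4 = 2 ∨ z % 4 = 3 := by omega
  simp only []
  rw [hmod]
  rcases hr with hr | hr | hr | hr <;> rw [hr]
  · left; rw [zpow_zero, map_one]
  · right; rw [zpow_one, hc]
  · left; rw [show (2:ℤ) = ((2:ℕ):ℤ) from rfl, zpow_natCast, hc2]
  · right
    have : fourCycle ^ (3 : ℤ) = fourCycle ^ (2 : ℕ) * fourCycle := by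
      rw [show (3:ℤ) = ((3:ℕ):ℤ) from rfl, zpow_natCast, pow_succ]
    rw [this, map_mul, hc2, one_mul, hc]

end Aux

/-- (inf ω₀)(g₁,g₂,h) = (-1)^{ε(g₁)ε(g₂)ε(h)} for g₁,g₂ ∈ S₄ and h ∈ H. -/
theorem infOmega0_on_H (π : S4 →* S4)
    (hker : ∀ g : S4, π g = 1 ↔ g ∈ NSet)
    (hid : ∀ σ ∈ S3sub, π σ = σ)
    (g₁ g₂ : S4) (h : S4) (hh : h ∈ Hsub) :
    infOmega0 π g₁ g₂ h = (-1 : ℂ) ^ (eps g₁ * eps g₂ * eps h) := by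
  have hX : Xc (π h) = 0 := by
    rcases pi_H π hker hid h hh with h1 | h1 <;> rw [Xc, if_pos] <;> tauto
  have he1 := eps_pi π hker hid g₁
  have he2 := eps_pi π hker hid g₂
  have he3 := eps_pi π hker hid h
  unfold infOmega0 omega0 alphaFun Yc
  rw [hX, mul_zero, mul_zero]
  norm_num
  rw [he1, he2, he3]
end

section
/- Let ω be the adapted 3-cocycle on S₄ for H = ⟨(1234)⟩ constructed as ω = (inf ω₀)·dξ, and let γ₁ = (12)(34). Then the 2-cocycle ω_{γ₁}(h₁,h₂) := ω(h₁,h₂,γ₁) on H satisfies ω_{γ₁}(h₁,h₂) = (-1)^{ε(h₁)ε(h₂)} = f₀(h₁)f₀(h₂)/f₀(h₁h₂) for h₁,h₂ ∈ H; in particular ω_{γ₁} = df₀ is a coboundary. -/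
open Equiv

/-- γ₁ = (12)(34), zero-indexed -/
def gamma1 : S4 := Equiv.swap 0 1 * Equiv.swap 2 3

lemma mem_H (h : S4) (hh : h ∈ Hsub) :
    h = 1 ∨ h = fourCycle ∨ h = fourCycle ^ 2 ∨ h = fourCycle ^ 3 := by
  obtain ⟨k, hk⟩ := Subgroup.mem_zpowers_iff.mp hh
  have h4 : fourCycle ^ (4 : ℤ) = 1 := by
    rw [show (4 : ℤ) = ((4 : ℕ) : ℤ) by norm_num, zpow_natCast]; decide
  have key : fourCycle ^ (k % 4) = h := by
    rw [← hk]
    conv_rhs => rw [← Int.emod_add_mul_ediv k 4]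
    rw [zpow_add, zpow_mul, h4, one_zpow, mul_one]
  have h0 : 0 ≤ k % 4 := Int.emod_nonneg k (by norm_num)
  have h1 : k % 4 < 4 := Int.emod_lt_of_pos k (by norm_num)
  set r := k % 4 with hr
  interval_cases r
  · left; rw [← key]; rfl
  · right; left; rw [← key]; rfl
  · right; right; left; rw [← key]
    rw [show (2 : ℤ) = ((2 : ℕ) : ℤ) by norm_num, zpow_natCast]
  · right; right; right; rw [← key]
    rw [show (3 : ℤ) = ((3 : ℕ) : ℤ) by norm_num, zpow_natCast]

lemma omega0_one (g₁ g₂ : S4) : omega0 g₁ g₂ 1 = 1 := by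
  have hx : Xc 1 = 0 := by decide
  have hy : Yc 1 = 0 := by decide
  simp [omega0, hx, hy, alphaFun]

/-- The Schur multiplier ω_{γ₁}(h₁,h₂) = ω(h₁,h₂,γ₁) equals
(-1)^{ε(h₁)ε(h₂)} = f₀(h₁)f₀(h₂)/f₀(h₁h₂) for h₁,h₂ ∈ H; in particular
ω_{γ₁} = df₀ is a coboundary. -/
theorem omega_gamma1_coboundary (π : S4 →* S4)
    (hker : ∀ g : S4, π g = 1 ↔ g ∈ NSet)
    (hid : ∀ σ ∈ S3sub, π σ = σ)
    (f : S4 → ℤ)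
    (hdef : ∀ σ ∈ S3sub, ∀ h ∈ Hsub, f (σ * h) = f0 h * (-1) ^ (eps σ * eps h))
    (h₁ h₂ : S4) (hh₁ : h₁ ∈ Hsub) (hh₂ : h₂ ∈ Hsub) :
    omegaAd π f h₁ h₂ gamma1 = (-1 : ℂ) ^ (eps h₁ * eps h₂) ∧
    omegaAd π f h₁ h₂ gamma1 = ((f0 h₁ : ℂ) * (f0 h₂ : ℂ)) / (f0 (h₁ * h₂) : ℂ) := by
  have hs : Equiv.swap 0 2 ∈ S3sub := by
    rw [S3sub, MulAction.mem_stabilizer_iff]; decide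
  have h1s : (1 : S4) ∈ S3sub := one_mem _
  have hcH : fourCycle ∈ Hsub := Subgroup.mem_zpowers _
  have hc2H : fourCycle ^ 2 ∈ Hsub := pow_mem hcH 2
  have hc3H : fourCycle ^ 3 ∈ Hsub := pow_mem hcH 3
  have h1H : (1 : S4) ∈ Hsub := one_mem _
  have hpg : π gamma1 = 1 := (hker gamma1).mpr (by right; left; rfl)
  have hinf : ∀ g₁ g₂ : S4, infOmega0 π g₁ g₂ gamma1 = 1 := by
    intro g₁ g₂; rw [infOmega0, hpg, omega0_one]
  have fg : f gamma1 = -1 := by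
    rw [show gamma1 = Equiv.swap 0 2 * fourCycle from by decide, hdef _ hs _ hcH]; decide
  have fcg : f (fourCycle * gamma1) = 1 := by
    rw [show fourCycle * gamma1 = Equiv.swap 0 2 * 1 from by decide, hdef _ hs _ h1H]; decide
  have fc2g : f (fourCycle ^ 2 * gamma1) = 1 := by
    rw [show fourCycle ^ 2 * gamma1 = Equiv.swap 0 2 * fourCycle ^ 3 from by decide,
      hdef _ hs _ hc3H]; decide
  have fc3g : f (fourCycle ^ 3 * gamma1) = -1 := by
    rw [show fourCycle ^ 3 * gamma1 = Equiv.swap 0 2 * fourCycle ^ 2 from by decide,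
      hdef _ hs _ hc2H]; decide
  have f1 : f 1 = 1 := by
    rw [show (1 : S4) = 1 * 1 from (one_mul 1).symm, hdef _ h1s _ h1H]; decide
  have fc : f fourCycle = 1 := by
    rw [show fourCycle = 1 * fourCycle from (one_mul _).symm, hdef _ h1s _ hcH]; decide
  have fc2 : f (fourCycle ^ 2) = -1 := by
    rw [show fourCycle ^ 2 = 1 * fourCycle ^ 2 from (one_mul _).symm, hdef _ h1s _ hc2H]; decide
  have fc3 : f (fourCycle ^ 3) = -1 := by
    rw [show fourCycle ^ 3 = 1 * fourCycle ^ 3 from (one_mul _).symm, hdef _ h1s _ hc3H]; decide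
  have m11 : fourCycle * fourCycle = fourCycle ^ 2 := by decide
  have m12 : fourCycle * fourCycle ^ 2 = fourCycle ^ 3 := by decide
  have m13 : fourCycle * fourCycle ^ 3 = 1 := by decide
  have m21 : fourCycle ^ 2 * fourCycle = fourCycle ^ 3 := by decide
  have m22 : fourCycle ^ 2 * fourCycle ^ 2 = 1 := by decide
  have m23 : fourCycle ^ 2 * fourCycle ^ 3 = fourCycle := by decide
  have m31 : fourCycle ^ 3 * fourCycle = 1 := by decide
  have m32 : fourCycle ^ 3 * fourCycle ^ 2 = fourCycle := by decide
  have m33 : fourCycle ^ 3 * fourCycle ^ 3 = fourCycle ^ 2 := by decide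
  have e0 : eps (1 : S4) = 0 := by decide
  have e1 : eps fourCycle = 1 := by decide
  have e2 : eps (fourCycle ^ 2) = 0 := by decide
  have e3 : eps (fourCycle ^ 3) = 1 := by decide
  have g0 : f0 (1 : S4) = 1 := by decide
  have g1 : f0 fourCycle = 1 := by decide
  have g2 : f0 (fourCycle ^ 2) = -1 := by decide
  have g3 : f0 (fourCycle ^ 3) = -1 := by decide
  rcases mem_H h₁ hh₁ with rfl | rfl | rfl | rfl <;>
    rcases mem_H h₂ hh₂ with rfl | rfl | rfl | rfl <;>
    constructor <;>
    simp only [omegaAd, hinf, dxi, xi, one_mul, mul_one, m11, m12, m13, m21, m22, m23, m31,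
      m32, m33, fg, fcg, fc2g, fc3g, f1, fc, fc2, fc3, e0, e1, e2, e3, g0, g1, g2, g3] <;>
    norm_num
end

section
/- Let ω be the adapted 3-cocycle on S₄ constructed above and l an integer. Then the sum Σ over order-2 elements r ∈ (123)H of ∏_{j=1}^{2} ω(r, r^{-j}, r)^{-l} equals (-1)^l. Concretely, the unique element r ∈ (123)H = {(123),(1342),(243),(14)} with r² = e is r = (14), and ω((14),(14),(14)) = -1. -/
open Equiv

/-- H = ⟨(1234)⟩ as a finset -/
def HFin : Finset S4 := {1, fourCycle, fourCycle ^ 2, fourCycle ^ 3}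

/-- the left coset (123)H as a finset -/
def cosetFin : Finset S4 := HFin.image (fun h => threeCycle * h)

set_option maxRecDepth 100000 in
/-- The unique element r ∈ (123)H with r² = e is (14), ω((14),(14),(14)) = -1,
and Σ_{r ∈ (123)H, r² = e} ∏_{j=1}^{2} ω(r,r^{-j},r)^{-l} = (-1)^l. -/
theorem second_FS_indicator (π : S4 →* S4)
    (hker : ∀ g : S4, π g = 1 ↔ g ∈ NSet)
    (hid : ∀ σ ∈ S3sub, π σ = σ)
    (f : S4 → ℤ)
    (hdef : ∀ σ ∈ S3sub, ∀ h ∈ Hsub, f (σ * h) = f0 h * (-1) ^ (eps σ * eps h))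
    (l : ℤ) :
    (Equiv.swap 0 3 ∈ cosetFin ∧ (Equiv.swap 0 3) ^ 2 = 1) ∧
    (∀ r ∈ cosetFin, r ^ 2 = 1 → r = Equiv.swap 0 3) ∧
    omegaAd π f (Equiv.swap 0 3) (Equiv.swap 0 3) (Equiv.swap 0 3) = -1 ∧
    (∑ r ∈ cosetFin.filter (fun r => r ^ 2 = 1),
        ∏ j ∈ Finset.Icc 1 2, (omegaAd π f r (r ^ (-(j : ℤ))) r) ^ (-l)) = (-1 : ℂ) ^ l := by
  have d1 : Equiv.swap 0 3 ∈ cosetFin := by decide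
  have d2 : (Equiv.swap (0:ℕ) 3) ^ 2 = 1 := by
    rw [sq, Equiv.swap_mul_self]
  have d3 : ∀ r ∈ cosetFin, r ^ 2 = 1 → r = Equiv.swap 0 3 := by decide
  refine ⟨⟨d1, d2⟩, d3, ?_, ?_⟩ <;>
  · set s : S4 := Equiv.swap 0 3 with hs
    set t : S4 := Equiv.swap 1 2 with ht
    have htS3 : t ∈ S3sub := by
      simp only [S3sub, MulAction.mem_stabilizer_iff]; decide
    have h3S3 : threeCycle ∈ S3sub := by
      simp only [S3sub, MulAction.mem_stabilizer_iff]; decide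
    have hπs : π s = t := by
      have h1 : s = (s * t) * t := by decide
      have h2 : π (s * t) = 1 := (hker _).mpr (by
        simp only [NSet, Set.mem_insert_iff, Set.mem_singleton_iff]; tauto)
      rw [h1, map_mul, h2, one_mul, hid t htS3]
    have hf1 : f 1 = 1 := by
      have := hdef 1 (one_mem _) 1 (one_mem _)
      simpa [f0, eps] using this
    have hfs : f s = -1 := by
      have h1 : s = threeCycle * fourCycle ^ 3 := by decide
      have h2 := hdef threeCycle h3S3 (fourCycle ^ 3)
        (pow_mem (Subgroup.mem_zpowers fourCycle) 3)
      rw [h1, h2]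
      have he3 : eps threeCycle = 0 := by decide
      have hf03 : f0 (fourCycle ^ 3) = -1 := by decide
      rw [he3, hf03]; norm_num
    have hes : eps s = 1 := by decide
    have he1 : eps (1 : S4) = 0 := by decide
    have hss : s * s = 1 := by decide
    have hXt : Xc t = 1 := by decide
    have hYt : Yc t = 1 := by decide
    have hX1 : Xc 1 = 0 := by decide
    have hY1 : Yc (1 : S4) = 0 := by decide
    have hα1 : ∀ c : ℤ, alphaFun 1 (-1) c = 1 := fun c => by simp [alphaFun]
    have hα2 : ∀ c : ℤ, alphaFun 1 0 c = 1 := fun c => by simp [alphaFun]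
    have hω1 : omegaAd π f s s s = -1 := by
      have hinf : infOmega0 π s s s = -1 := by
        simp only [infOmega0, hπs, omega0, hXt, hYt]
        norm_num [hα1]
      have hd : dxi f s s s = 1 := by
        simp only [dxi, xi, hss, hes, he1, hf1, hfs]
        norm_num
      rw [omegaAd, hinf, hd, mul_one]
    · first
      | exact hω1
      | · have hω2 : omegaAd π f s 1 s = 1 := by
            have hinf : infOmega0 π s 1 s = 1 := by
              simp only [infOmega0, hπs, map_one, omega0, hXt, hX1, hY1, hYt]
              norm_num [hα2]
            have hd : dxi f s 1 s = 1 := by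
              simp only [dxi, xi, mul_one, one_mul, hes, he1, hf1, hfs]
              norm_num
            rw [omegaAd, hinf, hd, mul_one]
          have hfil : cosetFin.filter (fun r => r ^ 2 = 1) = {s} := by decide
          rw [hfil, Finset.sum_singleton]
          have hIcc : Finset.Icc (1 : ℤ) 2 = ({1, 2} : Finset ℤ) := by decide
          rw [hIcc, Finset.prod_insert (by decide), Finset.prod_singleton]
          have hp1 : s ^ (-(1 : ℤ)) = s := by decide
          have hp2 : s ^ (-(2 : ℤ)) = 1 := by decide
          rw [hp1, hp2, hω1, hω2, one_zpow, mul_one, zpow_neg, ← inv_zpow]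
          norm_num
end

section
/- Let ω be the adapted 3-cocycle on S₄ constructed above. The set of order-3 elements of the coset (123)H = {(123),(1342),(243),(14)} is {(123),(243)}, and Σ_{r ∈ (123)H, r³ = e} ∏_{j=1}^{3} ω(r,r^{-j},r)^{-l} = 2·exp(-2πil/3). In particular ω((123),(132),(123))·ω((123),(123),(123)) = exp(2πi/3) and ω((243),(234),(243))·ω((243),(243),(243)) = exp(2πi/3). -/
open Equiv

/-- the 3-cycle (243), zero-indexed as (1 3 2) -/
def r243 : S4 := Equiv.swap 1 3 * Equiv.swap 2 3

set_option maxRecDepth 10000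

lemma dxi_triv (f : S4 → ℤ) (g₁ g₂ g₃ : S4) (h1 : eps g₁ = 0) (h2 : eps g₂ = 0)
    (h12 : eps (g₁ * g₂) = 0) : dxi f g₁ g₂ g₃ = 1 := by
  simp [dxi, xi, h1, h2, h12]

lemma omega0_a : omega0 threeCycle (threeCycle ^ 2) threeCycle =
    Complex.exp (2 * (Real.pi : ℂ) * Complex.I / 3) := by
  rw [omega0, show Yc threeCycle = 0 from by decide,
    show Yc (threeCycle ^ 2) = 0 from by decide,
    show Xc threeCycle = 1 from by decide, show Xc (threeCycle ^ 2) = 2 from by decide]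
  norm_num [alphaFun]
  congr 1; norm_num; ring

lemma omega0_b : omega0 threeCycle threeCycle threeCycle = 1 := by
  rw [omega0, show Yc threeCycle = 0 from by decide,
    show Xc threeCycle = 1 from by decide]
  norm_num [alphaFun]

lemma omega0_c : omega0 threeCycle 1 threeCycle = 1 := by
  rw [omega0, show Yc threeCycle = 0 from by decide, show Yc (1 : S4) = 0 from by decide,
    show Xc threeCycle = 1 from by decide, show Xc (1 : S4) = 0 from by decide]
  norm_num [alphaFun]
lemma mem_S3_threeCycle : threeCycle ∈ S3sub := by
  rw [S3sub, MulAction.mem_stabilizer_iff]; decide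

lemma mem_S3_threeCycle2 : threeCycle ^ 2 ∈ S3sub := by
  rw [S3sub, MulAction.mem_stabilizer_iff]; decide


/-- The order-3 elements of (123)H are (123) and (243),
Σ_{r ∈ (123)H, r³ = e} ∏_{j=1}^{3} ω(r,r^{-j},r)^{-l} = 2·exp(-2πil/3),
and ω((123),(132),(123))ω((123),(123),(123)) =
ω((243),(234),(243))ω((243),(243),(243)) = exp(2πi/3). -/
theorem third_FS_indicator (π : S4 →* S4)
    (hker : ∀ g : S4, π g = 1 ↔ g ∈ NSet)
    (hid : ∀ σ ∈ S3sub, π σ = σ)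
    (f : S4 → ℤ)
    (hdef : ∀ σ ∈ S3sub, ∀ h ∈ Hsub, f (σ * h) = f0 h * (-1) ^ (eps σ * eps h))
    (l : ℤ) :
    cosetFin.filter (fun r => r ^ 3 = 1) = {threeCycle, r243} ∧
    (∑ r ∈ cosetFin.filter (fun r => r ^ 3 = 1),
        ∏ j ∈ Finset.Icc 1 3, (omegaAd π f r (r ^ (-(j : ℤ))) r) ^ (-l)) =
      2 * Complex.exp (-(2 * (Real.pi : ℂ) * Complex.I * (l : ℂ)) / 3) ∧
    omegaAd π f threeCycle (threeCycle ^ 2) threeCycle *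
        omegaAd π f threeCycle threeCycle threeCycle =
      Complex.exp (2 * (Real.pi : ℂ) * Complex.I / 3) ∧
    omegaAd π f r243 (r243 ^ 2) r243 * omegaAd π f r243 r243 r243 =
      Complex.exp (2 * (Real.pi : ℂ) * Complex.I / 3) := by
  have hπt : π threeCycle = threeCycle := hid _ mem_S3_threeCycle
  have hπt2 : π (threeCycle ^ 2) = threeCycle ^ 2 := hid _ mem_S3_threeCycle2
  have hπr : π r243 = threeCycle := by
    rw [show r243 = threeCycle * (Equiv.swap 0 2 * Equiv.swap 1 3) from by decide, map_mul,
      hπt, (hker _).2 (by rw [NSet]; right; right; left; rfl), mul_one]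
  have hπr2 : π (r243 ^ 2) = threeCycle ^ 2 := by rw [map_pow, hπr]
  -- all our ω values reduce to ω₀ values
  have hωa : ∀ r : S4, π r = threeCycle → π (r ^ 2) = threeCycle ^ 2 → eps r = 0 →
      eps (r ^ 2) = 0 → eps (r * r ^ 2) = 0 → eps (r * r) = 0 → eps (r * 1) = 0 →
      omegaAd π f r (r ^ 2) r = Complex.exp (2 * (Real.pi : ℂ) * Complex.I / 3) ∧
      omegaAd π f r r r = 1 ∧ omegaAd π f r 1 r = 1 := by
    intro r h1 h2 e1 e2 e12 e11 e10
    refine ⟨?_, ?_, ?_⟩ <;>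
      rw [omegaAd, infOmega0, h1] <;>
      [rw [h2, dxi_triv f _ _ _ e1 e2 e12, omega0_a];
       rw [dxi_triv f _ _ _ e1 e1 e11, omega0_b];
       rw [map_one, dxi_triv f _ _ _ e1 (by decide) e10, omega0_c]] <;> ring
  obtain ⟨ha1, ha2, ha3⟩ := hωa threeCycle hπt hπt2 (by decide) (by decide)
    (by decide) (by decide) (by decide)
  obtain ⟨hb1, hb2, hb3⟩ := hωa r243 hπr hπr2 (by decide) (by decide)
    (by decide) (by decide) (by decide)
  have hfilter : cosetFin.filter (fun r => r ^ 3 = 1) = {threeCycle, r243} := by decide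
  have hprod : ∀ r : S4,
      omegaAd π f r (r ^ 2) r = Complex.exp (2 * (Real.pi : ℂ) * Complex.I / 3) →
      omegaAd π f r r r = 1 → omegaAd π f r 1 r = 1 →
      r ^ (-(1:ℤ)) = r ^ 2 → r ^ (-(2:ℤ)) = r → r ^ (-(3:ℤ)) = 1 →
      (∏ j ∈ Finset.Icc 1 3, (omegaAd π f r (r ^ (-(j : ℤ))) r) ^ (-l)) =
        Complex.exp (-(2 * (Real.pi : ℂ) * Complex.I * (l : ℂ)) / 3) := by
    intro r h1 h2 h3 z1 z2 z3
    rw [show (Finset.Icc 1 3 : Finset ℤ) = {1, 2, 3} from by decide,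
      Finset.prod_insert (by decide), Finset.prod_insert (by decide), Finset.prod_singleton,
      z1, z2, z3, h1, h2, h3]
    simp only [one_zpow, mul_one]
    rw [← Complex.exp_int_mul]
    congr 1
    push_cast
    ring
  refine ⟨hfilter, ?_, by rw [ha1, ha2, mul_one], by rw [hb1, hb2, mul_one]⟩
  rw [hfilter, Finset.sum_pair (by decide),
    hprod threeCycle ha1 ha2 ha3 (by decide) (by decide) (by decide),
    hprod r243 hb1 hb2 hb3 (by decide) (by decide) (by decide)]
  ring
end
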